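/- Let F be a distribution function satisfying the second-order condition 1 − F(x) = C₁x^{−α} + C₂x^{−β} + o(x^{−β}) as x → ∞ with 0 < α < β < ∞ and C₁ > 0, set F̃(x) = 1 − C₁x^{−α} − C₂x^{−β}, ζ = (β−α)/α, and a_m = κ m^{1/α} (ln m)^{−1/α} with 0 < κ < (C₁/ζ)^{1/α}. Then R_{m,1} := m ∫_{a_m}^∞ ( F^{m−1}(x) − F̃^{m−1}(x) ) ( C₁α/(α+1) · x^{−α−1} + C₂β/(β+1) · x^{−β−1} ) dx = o(m^{−ζ}) as m → ∞. -/

import Mathlib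

/-!
Far out, `F` and `F̃` both lie within `x^(-β)` of `1 - C₁x^(-α) - C₂x^(-β)`, hence have absolute
value at most `1 - c x^(-α)` with `c = C₁/2`. So, writing `m = n + 2`,
`|F^(n+1) - F̃^(n+1)| ≤ (n+1) |F - F̃| exp(-n c x^(-α))`, and `(F - F̃) · w = o(x^(-α-β-1))` for
the weight `w = O(x^(-α-1))`. The substitution `y = 1/x` turns `∫₀^∞ x^(-γ-1) exp(-b x^(-α)) dx`
into the Gamma integral `b^(-γ/α) Γ(γ/α) / α`; with `γ = α + β` and `b = n c ≍ m`, the quantity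
`m ∫_{a_m}^∞ …` is `o(m² · m^(-(α+β)/α)) = o(m^(-ζ))` once `a_m → ∞`.
-/

open MeasureTheory Filter Set Asymptotics
open scoped Topology

/-- The second-order condition `1 - F x = C₁ x^(-α) + C₂ x^(-β) + o(x^(-β))` as `x → ∞`. -/
def SecondOrderCondition (F : ℝ → ℝ) (C₁ C₂ α β : ℝ) : Prop :=
  (fun x : ℝ => (1 - F x) - (C₁ * x ^ (-α) + C₂ * x ^ (-β)))
    =o[atTop] fun x : ℝ => x ^ (-β)

open Real

lemma abs_pow_succ_sub_pow_succ_le_mul_exp {p q t : ℝ} (hp : |p| ≤ 1 - t) (hq : |q| ≤ 1 - t)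
    (n : ℕ) : |p ^ (n + 1) - q ^ (n + 1)| ≤ (n + 1) * |p - q| * exp (-(n * t)) := by
  have hmax : max |p| |q| ≤ 1 - t := max_le hp hq
  have hpow : max |p| |q| ^ n ≤ exp (-(n * t)) := calc
    max |p| |q| ^ n ≤ exp (-t) ^ n :=
      pow_le_pow_left₀ (le_max_of_le_left (abs_nonneg p)) (hmax.trans (one_sub_le_exp_neg t)) n
    _ = exp (-(n * t)) := by rw [← Real.exp_nat_mul, mul_neg]
  calc |p ^ (n + 1) - q ^ (n + 1)| ≤ |p - q| * (n + 1 : ℕ) * max |p| |q| ^ n :=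
        abs_pow_sub_pow_le p q (n + 1)
    _ ≤ |p - q| * (n + 1 : ℕ) * exp (-(n * t)) := by gcongr
    _ = (n + 1) * |p - q| * exp (-(n * t)) := by push_cast; ring

private lemma smul_comp_rpow_neg_one {α γ b x : ℝ} (hx : 0 < x) :
    (|(-1 : ℝ)| * x ^ ((-1 : ℝ) - 1)) • ((x ^ (-1 : ℝ)) ^ (γ - 1) * exp (-b * (x ^ (-1 : ℝ)) ^ α))
      = x ^ (-γ - 1) * exp (-b * x ^ (-α)) := by
  rw [smul_eq_mul, ← rpow_mul hx.le, ← rpow_mul hx.le, abs_neg, abs_one, one_mul, ← mul_assoc,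
    ← rpow_add hx]
  ring_nf

theorem integrableOn_Ioi_rpow_mul_exp_neg_mul_rpow_neg {α γ b : ℝ} (hα : 0 < α) (hγ : 0 < γ)
    (hb : 0 < b) : IntegrableOn (fun x ↦ x ^ (-γ - 1) * exp (-b * x ^ (-α))) (Ioi 0) := by
  have h := (integrableOn_Ioi_comp_rpow_iff (fun y ↦ y ^ (γ - 1) * exp (-b * y ^ α))
    (by norm_num : (-1 : ℝ) ≠ 0)).2 (integrableOn_rpow_mul_exp_neg_mul_rpow (by linarith) hα hb)
  exact h.congr_fun (fun x hx ↦ smul_comp_rpow_neg_one hx) measurableSet_Ioi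

theorem integral_Ioi_rpow_mul_exp_neg_mul_rpow_neg {α γ b : ℝ} (hα : 0 < α) (hγ : 0 < γ)
    (hb : 0 < b) :
    ∫ x in Ioi 0, x ^ (-γ - 1) * exp (-b * x ^ (-α)) = b ^ (-γ / α) * (1 / α) * Gamma (γ / α) := by
  have h := integral_comp_rpow_Ioi (fun y ↦ y ^ (γ - 1) * exp (-b * y ^ α))
    (by norm_num : (-1 : ℝ) ≠ 0)
  rw [integral_rpow_mul_exp_neg_mul_rpow hα (by linarith) hb, sub_add_cancel] at h
  rw [← h]
  exact setIntegral_congr_fun measurableSet_Ioi fun x hx ↦ (smul_comp_rpow_neg_one hx).symm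

theorem isLittleO_rpow_rpow_atTop {s t : ℝ} (hst : s < t) :
    (fun x : ℝ ↦ x ^ s) =o[atTop] fun x ↦ x ^ t := by
  have hpos : ∀ᶠ x : ℝ in atTop, 0 < x := eventually_gt_atTop 0
  rw [isLittleO_iff_tendsto' (hpos.mono fun x hx h ↦ absurd h (rpow_pos_of_pos hx t).ne')]
  refine (tendsto_rpow_neg_atTop (sub_pos.2 hst)).congr' ?_
  filter_upwards [hpos] with x hx
  rw [← rpow_sub hx, neg_sub]

theorem tendsto_div_log_atTop : Tendsto (fun x : ℝ ↦ x / log x) atTop atTop := by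
  have h : Tendsto (fun x ↦ log x / x) atTop (𝓝[>] 0) := by
    refine tendsto_nhdsWithin_iff.2
      ⟨by simpa using isLittleO_log_id_atTop.tendsto_div_nhds_zero, ?_⟩
    filter_upwards [eventually_gt_atTop 1] with x hx
    exact div_pos (log_pos hx) (by linarith)
  simpa only [Function.comp_def, inv_div] using tendsto_inv_nhdsGT_zero.comp h

theorem abs_setIntegral_pow_sub_pow_mul_le {α γ c ε a : ℝ} (hα : 0 < α) (hγ : 0 < γ)
    (ha : 0 ≤ a) {f g w : ℝ → ℝ} {n : ℕ} (hnc : 0 < n * c)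
    (hf : ∀ x ∈ Ioi a, |f x| ≤ 1 - c * x ^ (-α)) (hg : ∀ x ∈ Ioi a, |g x| ≤ 1 - c * x ^ (-α))
    (hfgw : ∀ x ∈ Ioi a, |(f x - g x) * w x| ≤ ε * x ^ (-γ - 1)) :
    |∫ x in Ioi a, (f x ^ (n + 1) - g x ^ (n + 1)) * w x|
      ≤ (n + 1) * ε * ((n * c) ^ (-γ / α) * (1 / α) * Gamma (γ / α)) := by
  set k := fun x : ℝ ↦ x ^ (-γ - 1) * exp (-(n * c) * x ^ (-α))
  have hk_int : IntegrableOn k (Ioi 0) := integrableOn_Ioi_rpow_mul_exp_neg_mul_rpow_neg hα hγ hnc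
  have hpointwise : ∀ x ∈ Ioi a,
      ‖(f x ^ (n + 1) - g x ^ (n + 1)) * w x‖ ≤ (n + 1) * ε * k x := by
    intro x hx
    have hpow := abs_pow_succ_sub_pow_succ_le_mul_exp (hf x hx) (hg x hx) n
    calc ‖(f x ^ (n + 1) - g x ^ (n + 1)) * w x‖
        = |f x ^ (n + 1) - g x ^ (n + 1)| * |w x| := by rw [Real.norm_eq_abs, abs_mul]
      _ ≤ (n + 1) * |f x - g x| * exp (-(n * (c * x ^ (-α)))) * |w x| := by gcongr
      _ = (n + 1) * exp (-(n * c) * x ^ (-α)) * |(f x - g x) * w x| := by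
        rw [abs_mul, neg_mul, mul_assoc (n : ℝ)]; ring
      _ ≤ (n + 1) * exp (-(n * c) * x ^ (-α)) * (ε * x ^ (-γ - 1)) := by gcongr; exact hfgw x hx
      _ = (n + 1) * ε * k x := by ring
  have hk_nonneg : ∀ x ∈ Ioi (0 : ℝ), 0 ≤ k x := fun x hx ↦ by
    have := hx.out.le; positivity
  calc |∫ x in Ioi a, (f x ^ (n + 1) - g x ^ (n + 1)) * w x|
      ≤ ∫ x in Ioi a, (n + 1) * ε * k x :=
        norm_integral_le_of_norm_le ((hk_int.mono_set (Ioi_subset_Ioi ha)).const_mul _)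
          ((ae_restrict_iff' measurableSet_Ioi).2 (.of_forall hpointwise))
    _ = (n + 1) * ε * ∫ x in Ioi a, k x := integral_const_mul _ _
    _ ≤ (n + 1) * ε * ∫ x in Ioi 0, k x := by
        have hε : 0 ≤ ε := by
          have hx : a + 1 ∈ Ioi a := by simp
          have hpos : 0 < (a + 1) ^ (-γ - 1) := by positivity
          exact nonneg_of_mul_nonneg_left ((abs_nonneg _).trans (hfgw _ hx)) hpos
        refine mul_le_mul_of_nonneg_left ?_ (by positivity)
        exact setIntegral_mono_set hk_int ((ae_restrict_iff' measurableSet_Ioi).2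
          (.of_forall hk_nonneg)) (Ioi_subset_Ioi ha).eventuallyLE
    _ = (n + 1) * ε * ((n * c) ^ (-γ / α) * (1 / α) * Gamma (γ / α)) := by
        rw [integral_Ioi_rpow_mul_exp_neg_mul_rpow_neg hα hγ hnc]

lemma natCast_add_two_mul_rpow_neg_le {c s : ℝ} (hc : 0 < c) (hs : 0 ≤ s) {n : ℕ} (hn : 2 ≤ n) :
    (n + 2 : ℝ) * ((n + 1) * (n * c) ^ (-s)) ≤ (c / 2) ^ (-s) * (n + 2 : ℝ) ^ (2 - s) := by
  have hn' : (2 : ℝ) ≤ n := by exact_mod_cast hn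
  have hm : (0 : ℝ) < n + 2 := by positivity
  have hshift : (n * c) ^ (-s) ≤ (c / 2) ^ (-s) * (n + 2 : ℝ) ^ (-s) := by
    rw [← mul_rpow (by positivity) hm.le]
    exact rpow_le_rpow_of_nonpos (by positivity) (by nlinarith) (by linarith)
  calc (n + 2 : ℝ) * ((n + 1) * (n * c) ^ (-s))
      ≤ (n + 2 : ℝ) * ((n + 2) * ((c / 2) ^ (-s) * (n + 2 : ℝ) ^ (-s))) := by
        gcongr; linarith
    _ = (c / 2) ^ (-s) * (n + 2 : ℝ) ^ (2 - s) := by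
        rw [sub_eq_add_neg, rpow_add hm, rpow_two]; ring

theorem isLittleO_natCast_mul_setIntegral_pow_sub_pow_mul {α γ c : ℝ} (hα : 0 < α)
    (hγ : 0 < γ) (hc : 0 < c) {f g w : ℝ → ℝ} {a : ℕ → ℝ} (ha : Tendsto a atTop atTop)
    (hf : ∀ᶠ x in atTop, |f x| ≤ 1 - c * x ^ (-α))
    (hg : ∀ᶠ x in atTop, |g x| ≤ 1 - c * x ^ (-α))
    (hfgw : (fun x ↦ (f x - g x) * w x) =o[atTop] fun x ↦ x ^ (-γ - 1)) :
    (fun m : ℕ ↦ (m : ℝ) * ∫ x in Ioi (a m), (f x ^ (m - 1) - g x ^ (m - 1)) * w x)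
      =o[atTop] fun m : ℕ ↦ (m : ℝ) ^ (2 - γ / α) := by
  set s := γ / α
  set K := (1 / α) * Gamma s * (c / 2) ^ (-s)
  have hs : 0 < s := div_pos hγ hα
  have hK : 0 < K := by positivity
  rw [isLittleO_iff]
  intro ε hε
  obtain ⟨X, hX⟩ := eventually_atTop.1 (hf.and (hg.and
    ((hfgw.def (div_pos hε hK)).and (eventually_gt_atTop 0))))
  filter_upwards [ha.eventually_ge_atTop X, ha.eventually_ge_atTop 0, eventually_ge_atTop 4]
    with m hXa h0a hm
  obtain ⟨n, rfl⟩ : ∃ n, m = n + 2 := ⟨m - 2, by omega⟩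
  have hXx : ∀ x ∈ Ioi (a (n + 2)), X ≤ x := fun x hx ↦ hXa.trans hx.out.le
  have hfgw' : ∀ x ∈ Ioi (a (n + 2)), |(f x - g x) * w x| ≤ ε / K * x ^ (-γ - 1) := by
    intro x hx
    obtain ⟨-, -, hx, hx0⟩ := hX x (hXx x hx)
    rwa [Real.norm_eq_abs, Real.norm_eq_abs, abs_of_pos (rpow_pos_of_pos hx0 _)] at hx
  have hint := abs_setIntegral_pow_sub_pow_mul_le hα hγ h0a (n := n)
    (mul_pos (by exact_mod_cast (by omega : 0 < n)) hc)
    (fun x hx ↦ (hX x (hXx x hx)).1) (fun x hx ↦ (hX x (hXx x hx)).2.1) hfgw'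
  rw [show n + 2 - 1 = n + 1 by omega]
  push_cast
  calc ‖(n + 2 : ℝ) * ∫ x in Ioi (a (n + 2)), (f x ^ (n + 1) - g x ^ (n + 1)) * w x‖
      ≤ (n + 2 : ℝ) * ((n + 1) * (ε / K) * ((n * c) ^ (-s) * (1 / α) * Gamma s)) := by
        rw [norm_mul, Real.norm_eq_abs, abs_of_pos (by positivity)]
        gcongr
        simpa [neg_div] using hint
    _ = ε / K * ((1 / α) * Gamma s) * ((n + 2 : ℝ) * ((n + 1) * (n * c) ^ (-s))) := by ring
    _ ≤ ε / K * ((1 / α) * Gamma s) * ((c / 2) ^ (-s) * (n + 2 : ℝ) ^ (2 - s)) :=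
        mul_le_mul_of_nonneg_left
          (natCast_add_two_mul_rpow_neg_le hc hs.le (by omega)) (by positivity)
    _ = ε * ‖(n + 2 : ℝ) ^ (2 - s)‖ := by
        rw [Real.norm_eq_abs, abs_of_pos (by positivity)]
        simp only [K]
        field_simp

theorem eventually_abs_le_one_sub_half_mul_rpow {C₁ C₂ α β : ℝ} (hα : 0 < α) (hαβ : α < β)
    (hC₁ : 0 < C₁) :
    ∀ᶠ x in atTop, ∀ y, |y - (1 - C₁ * x ^ (-α) - C₂ * x ^ (-β))| ≤ x ^ (-β) →
      |y| ≤ 1 - C₁ / 2 * x ^ (-α) := by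
  have hsmall : ∀ᶠ x in atTop, C₁ * x ^ (-α) ≤ 1 := by
    have h := (tendsto_rpow_neg_atTop hα).const_mul C₁
    rw [mul_zero] at h
    exact h.eventually (eventually_le_nhds one_pos)
  have hdom : ∀ᶠ x in atTop, ‖x ^ (-β)‖ ≤ C₁ / 2 / (|C₂| + 1) * ‖x ^ (-α)‖ :=
    (isLittleO_rpow_rpow_atTop (neg_lt_neg hαβ)).def (by positivity)
  filter_upwards [hsmall, hdom, eventually_gt_atTop 0] with x hsmall hdom hx y hy
  have hu := rpow_pos_of_pos hx (-α)
  have hv := rpow_pos_of_pos hx (-β)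
  rw [Real.norm_eq_abs, Real.norm_eq_abs, abs_of_pos hu, abs_of_pos hv,
    div_mul_eq_mul_div, le_div_iff₀ (by positivity)] at hdom
  have hC₂v : |C₂ * x ^ (-β)| = |C₂| * x ^ (-β) := by rw [abs_mul, abs_of_pos hv]
  rw [abs_le] at hy ⊢
  constructor <;>
    nlinarith [le_abs_self (C₂ * x ^ (-β)), neg_abs_le (C₂ * x ^ (-β))]

theorem tendsto_mul_rpow_mul_log_rpow_neg_atTop {κ α : ℝ} (hκ : 0 < κ) (hα : 0 < α) :
    Tendsto (fun m : ℕ ↦ κ * (m : ℝ) ^ (1 / α) * log m ^ (-(1 / α))) atTop atTop := by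
  have h := (tendsto_rpow_atTop (y := 1 / α) (by positivity)).comp tendsto_div_log_atTop
  refine ((h.const_mul_atTop hκ).comp tendsto_natCast_atTop_atTop).congr' ?_
  filter_upwards [eventually_ge_atTop 2] with m hm
  have hlog : 0 < log m := log_pos (by exact_mod_cast hm)
  simp only [Function.comp_apply, div_rpow (Nat.cast_nonneg m) hlog.le, rpow_neg hlog.le]
  ring

theorem remainder_Rm1_negligible_general
    (F : ℝ → ℝ)
    (C₁ C₂ α β : ℝ) (hα : 0 < α) (hαβ : α < β) (hC₁ : 0 < C₁)
    (hso : SecondOrderCondition F C₁ C₂ α β)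
    (Ftilde : ℝ → ℝ)
    (hFt : ∀ x : ℝ, Ftilde x = 1 - C₁ * x ^ (-α) - C₂ * x ^ (-β))
    (ζ : ℝ) (hζ : ζ = (β - α) / α)
    (κ : ℝ) (hκ : 0 < κ)
    (a : ℕ → ℝ)
    (ha : ∀ m : ℕ, a m = κ * (m : ℝ) ^ (1 / α) * (Real.log m) ^ (-(1 / α))) :
    (fun m : ℕ => (m : ℝ) *
        ∫ x in Set.Ioi (a m),
          ((F x) ^ (m - 1) - (Ftilde x) ^ (m - 1)) *
            (C₁ * α / (α + 1) * x ^ (-α - 1) + C₂ * β / (β + 1) * x ^ (-β - 1)))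
      =o[atTop] fun m : ℕ => (m : ℝ) ^ (-ζ) := by
  have hFF : (fun x ↦ F x - Ftilde x) =o[atTop] fun x ↦ x ^ (-β) :=
    hso.neg_left.congr_left fun x ↦ by rw [hFt]; ring
  have hweight : (fun x ↦ C₁ * α / (α + 1) * x ^ (-α - 1) + C₂ * β / (β + 1) * x ^ (-β - 1))
      =O[atTop] fun x ↦ x ^ (-α - 1) :=
    ((isBigO_refl _ _).const_mul_left _).add
      ((isLittleO_rpow_rpow_atTop (by linarith)).isBigO.const_mul_left _)
  have hprod := (hFF.mul_isBigO hweight).congr' EventuallyEq.rfl <| by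
    filter_upwards [eventually_gt_atTop 0] with x hx
    rw [← rpow_add hx, show -β + (-α - 1) = -(α + β) - 1 by ring]
  have hbound := eventually_abs_le_one_sub_half_mul_rpow (C₂ := C₂) hα hαβ hC₁
  have hF : ∀ᶠ x in atTop, |F x| ≤ 1 - C₁ / 2 * x ^ (-α) := by
    filter_upwards [hbound, hFF.def one_pos, eventually_gt_atTop 0] with x hx hFx hx0
    refine hx _ ?_
    rw [← hFt]
    simpa [abs_of_pos (rpow_pos_of_pos hx0 _)] using hFx
  have hFt' : ∀ᶠ x in atTop, |Ftilde x| ≤ 1 - C₁ / 2 * x ^ (-α) := by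
    filter_upwards [hbound, eventually_gt_atTop 0] with x hx hx0
    exact hx _ (by rw [← hFt, sub_self, abs_zero]; positivity)
  rw [show -ζ = 2 - (α + β) / α by rw [hζ]; field_simp; ring]
  exact isLittleO_natCast_mul_setIntegral_pow_sub_pow_mul hα (by linarith) (half_pos hC₁)
    ((tendsto_mul_rpow_mul_log_rpow_neg_atTop hκ hα).congr fun m ↦ (ha m).symm) hF hFt' hprod

/-- **The remainder `R_{m,1}` is negligible.** Under the second-order condition with
`0 < α < β < ∞`, `C₁ > 0`, with `F̃(x) = 1 - C₁x^(-α) - C₂x^(-β)`, `ζ = (β-α)/α`,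
`a_m = κ m^(1/α)(ln m)^(-1/α)` and `0 < κ < (C₁/ζ)^(1/α)`, one has
`R_{m,1} = m ∫_{a_m}^∞ (F^(m-1)(x) - F̃^(m-1)(x))(C₁α/(α+1) x^(-α-1) + C₂β/(β+1) x^(-β-1)) dx
 = o(m^(-ζ))` as `m → ∞`. -/
theorem remainder_Rm1_negligible
    (F : ℝ → ℝ)
    (C₁ C₂ α β : ℝ) (hα : 0 < α) (hαβ : α < β) (hC₁ : 0 < C₁)
    (hso : SecondOrderCondition F C₁ C₂ α β)
    (Ftilde : ℝ → ℝ)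
    (hFt : ∀ x : ℝ, Ftilde x = 1 - C₁ * x ^ (-α) - C₂ * x ^ (-β))
    (ζ : ℝ) (hζ : ζ = (β - α) / α)
    (κ : ℝ) (hκ : 0 < κ) (hκ' : κ < (C₁ / ζ) ^ (1 / α))
    (a : ℕ → ℝ)
    (ha : ∀ m : ℕ, a m = κ * (m : ℝ) ^ (1 / α) * (Real.log m) ^ (-(1 / α))) :
    (fun m : ℕ => (m : ℝ) *
        ∫ x in Set.Ioi (a m),
          ((F x) ^ (m - 1) - (Ftilde x) ^ (m - 1)) *
            (C₁ * α / (α + 1) * x ^ (-α - 1) + C₂ * β / (β + 1) * x ^ (-β - 1)))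
      =o[atTop] fun m : ℕ => (m : ℝ) ^ (-ζ) :=
  remainder_Rm1_negligible_general F C₁ C₂ α β hα hαβ hC₁ hso Ftilde hFt ζ hζ κ hκ a ha
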